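/- arXiv:math/0211345 — 2 statements merged into one kernel-verified Lean document; each statement's English description precedes it below -/
import Mathlib

section
/- Let X be a compact Hausdorff topological space and let P be a prime element of Max C(X) (the quantale of closed linear subspaces of the commutative C*-algebra C(X) of complex-valued continuous functions on X) with P ≠ C(X). Then there exists a point x₀ ∈ X such that P = {f ∈ C(X) : f(x₀) = 0}. In particular, every proper prime element of Max C(X) is a maximal proper closed linear subspace of C(X) and a closed two-sided ideal. -/
variable {X : Type*} [TopologicalSpace X] [CompactSpace X] [T2Space X]

/-- The quantale multiplication of `Max C(X)`: `M∘N` is the closure of the linear span of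
the products. -/
noncomputable def qmul (M N : Submodule ℂ C(X, ℂ)) : Submodule ℂ C(X, ℂ) :=
  (M * N).topologicalClosure

/-- A prime element of the quantale `Max C(X)` of closed linear subspaces of `C(X)`:
`M∘⊤∘N ≤ P` implies `M ≤ P` or `N ≤ P`. -/
def IsPrimeEl (P : Submodule ℂ C(X, ℂ)) : Prop :=
  ∀ M N : Submodule ℂ C(X, ℂ), IsClosed (M : Set C(X, ℂ)) → IsClosed (N : Set C(X, ℂ)) →
    qmul (qmul M ⊤) N ≤ P → M ≤ P ∨ N ≤ P

/-!
If no point `x` had `vanishingOn {x} ≤ P`, then every point would have a neighbourhood `U` with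
`vanishingOn U ≰ P`: since `P` is closed, it suffices to approximate a function vanishing at `x`
by functions vanishing near `x`, which a cutoff `f ↦ f · r(‖f‖)` does. Finitely many of these
neighbourhoods cover `X`, and since `vanishingOn C ∘ ⊤ ∘ vanishingOn D ≤ vanishingOn (C ∪ D)`,
primeness of `P` forces `vanishingOn U ≤ P` for one of them. Finally `vanishingOn {x}` is the
kernel of evaluation at `x`, a hyperplane, so a proper `P ⊇ vanishingOn {x}` is equal to it.
-/

open Topology

section VanishingOn

omit [CompactSpace X] [T2Space X]

def vanishingOn (C : Set X) : Submodule ℂ C(X, ℂ) where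
  carrier := {f | ∀ x ∈ C, f x = 0}
  add_mem' hf hg x hx := by simp [hf x hx, hg x hx]
  zero_mem' _ _ := rfl
  smul_mem' c _ hf x hx := by simp [hf x hx]

theorem mem_vanishingOn {C : Set X} {f : C(X, ℂ)} : f ∈ vanishingOn C ↔ ∀ x ∈ C, f x = 0 :=
  Iff.rfl

theorem isClosed_vanishingOn (C : Set X) : IsClosed (vanishingOn C : Set C(X, ℂ)) := by
  have : (vanishingOn C : Set C(X, ℂ)) = ⋂ x ∈ C, (fun f : C(X, ℂ) => f x) ⁻¹' {0} := by
    ext f; simp [mem_vanishingOn]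
  rw [this]
  exact isClosed_biInter fun x _ => isClosed_singleton.preimage (continuous_eval_const x)

theorem vanishingOn_empty : vanishingOn (∅ : Set X) = ⊤ :=
  eq_top_iff.2 fun _ _ _ hx => hx.elim

theorem vanishingOn_univ : vanishingOn (Set.univ : Set X) = ⊥ :=
  eq_bot_iff.2 fun _ hf => (Submodule.mem_bot ℂ).2 <| ContinuousMap.ext fun x => hf x trivial

theorem vanishingOn_union (C D : Set X) :
    vanishingOn (C ∪ D) = vanishingOn C ⊓ vanishingOn D := by
  ext f; simp [mem_vanishingOn, or_imp, forall_and]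

theorem isCoatom_vanishingOn_singleton (x : X) : IsCoatom (vanishingOn ({x} : Set X)) := by
  have : vanishingOn {x} = LinearMap.ker ((ContinuousMap.evalCLM ℂ x : C(X, ℂ) →L[ℂ] ℂ) : C(X, ℂ) →ₗ[ℂ] ℂ) := by
    ext f; simp [mem_vanishingOn]
  rw [this]
  exact LinearMap.isCoatom_ker_of_surjective fun z => ⟨ContinuousMap.const X z, rfl⟩

end VanishingOn

omit [T2Space X] in
theorem exists_dist_lt_and_eq_zero (f : C(X, ℂ)) {ε : ℝ} (hε : 0 < ε) :
    ∃ g : C(X, ℂ), dist f g < ε ∧ ∀ x, ‖f x‖ ≤ ε / 2 → g x = 0 := by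
  set r : X → ℝ := fun x => max 0 (min 1 (2 * ‖f x‖ / ε - 1))
  refine ⟨f * ⟨fun x => (r x : ℂ), by fun_prop⟩, ?_, fun x hx => ?_⟩
  · rw [dist_eq_norm, ContinuousMap.norm_lt_iff _ hε]
    intro x
    have hr : 0 ≤ 1 - r x ∧ 1 - r x ≤ 1 := ⟨by simp [r], by simp [r]⟩
    have hdiff : ‖(f - f * ⟨fun x => (r x : ℂ), by fun_prop⟩) x‖ = ‖f x‖ * (1 - r x) := by
      rw [← abs_of_nonneg hr.1, ← Real.norm_eq_abs, ← Complex.norm_real, ← norm_mul]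
      simp [mul_sub]
    rw [hdiff]
    by_cases hfx : ‖f x‖ < ε
    · exact (mul_le_of_le_one_right (norm_nonneg _) hr.2).trans_lt hfx
    · have : r x = 1 := by
        have : 1 ≤ 2 * ‖f x‖ / ε - 1 := by rw [le_sub_iff_add_le, le_div_iff₀ hε]; linarith
        simp [r, this]
      simp [this, hε]
  · have : r x = 0 := by
      have : 2 * ‖f x‖ / ε - 1 ≤ 0 := by rw [sub_nonpos, div_le_one hε]; linarith
      simp [r, this]
    simp [this]

omit [T2Space X] in
theorem vanishingOn_le_of_forall_nhdsSet {P : Submodule ℂ C(X, ℂ)}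
    (hPc : IsClosed (P : Set C(X, ℂ))) {C : Set X}
    (h : ∀ U ∈ 𝓝ˢ C, vanishingOn U ≤ P) : vanishingOn C ≤ P := by
  intro f hf
  rw [← SetLike.mem_coe, ← hPc.closure_eq, Metric.mem_closure_iff]
  intro ε hε
  obtain ⟨g, hfg, hg⟩ := exists_dist_lt_and_eq_zero f hε
  have hU : {x | ‖f x‖ < ε / 2} ∈ 𝓝ˢ C :=
    (isOpen_lt (by fun_prop) continuous_const).mem_nhdsSet.2 fun x hx => by
      simp [hf x hx, hε]
  exact ⟨g, h _ hU fun x hx => hg x hx.le, hfg⟩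

theorem qmul_le_vanishingOn_of_left_le {M N : Submodule ℂ C(X, ℂ)} {C : Set X}
    (h : M ≤ vanishingOn C) : qmul M N ≤ vanishingOn C :=
  Submodule.topologicalClosure_minimal _
    (Submodule.mul_le.2 fun f hf g _ x hx => by simp [h hf x hx]) (isClosed_vanishingOn C)

theorem qmul_le_vanishingOn_of_right_le {M N : Submodule ℂ C(X, ℂ)} {C : Set X}
    (h : N ≤ vanishingOn C) : qmul M N ≤ vanishingOn C :=
  Submodule.topologicalClosure_minimal _
    (Submodule.mul_le.2 fun f _ g hg x hx => by simp [h hg x hx]) (isClosed_vanishingOn C)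

namespace IsPrimeEl

variable {P : Submodule ℂ C(X, ℂ)}

theorem vanishingOn_le_or_vanishingOn_le (hP : IsPrimeEl P) {C D : Set X}
    (h : vanishingOn (C ∪ D) ≤ P) : vanishingOn C ≤ P ∨ vanishingOn D ≤ P := by
  refine hP _ _ (isClosed_vanishingOn C) (isClosed_vanishingOn D) (le_trans ?_ h)
  rw [vanishingOn_union]
  exact le_inf (qmul_le_vanishingOn_of_left_le (qmul_le_vanishingOn_of_left_le le_rfl))
    (qmul_le_vanishingOn_of_right_le le_rfl)

theorem exists_vanishingOn_le_of_biUnion (hP : IsPrimeEl P) (hPne : P ≠ ⊤) {ι : Type*}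
    (s : Finset ι) (U : ι → Set X) (h : vanishingOn (⋃ i ∈ s, U i) ≤ P) :
    ∃ i ∈ s, vanishingOn (U i) ≤ P := by
  classical
  induction s using Finset.induction_on with
  | empty => simp [vanishingOn_empty, top_le_iff, hPne] at h
  | insert a s _ ih =>
    rw [Finset.set_biUnion_insert] at h
    rcases hP.vanishingOn_le_or_vanishingOn_le h with ha | hs
    · exact ⟨a, Finset.mem_insert_self a s, ha⟩
    · obtain ⟨i, hi, hiP⟩ := ih hs
      exact ⟨i, Finset.mem_insert_of_mem hi, hiP⟩

theorem exists_vanishingOn_singleton_le (hP : IsPrimeEl P) (hPc : IsClosed (P : Set C(X, ℂ)))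
    (hPne : P ≠ ⊤) : ∃ x, vanishingOn {x} ≤ P := by
  by_contra! hno
  have hnhds : ∀ x, ∃ U ∈ 𝓝 x, ¬ vanishingOn U ≤ P := fun x => by
    by_contra! hall
    exact hno x (vanishingOn_le_of_forall_nhdsSet hPc (by simpa [nhdsSet_singleton] using hall))
  choose U hU hUP using hnhds
  obtain ⟨t, -, hcover⟩ := isCompact_univ.elim_nhds_subcover U fun x _ => hU x
  have hle : vanishingOn (⋃ x ∈ t, U x) ≤ P := by
    rw [Set.eq_univ_of_univ_subset hcover, vanishingOn_univ]
    exact bot_le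
  obtain ⟨x, -, hx⟩ := hP.exists_vanishingOn_le_of_biUnion hPne t U hle
  exact hUP x hx

end IsPrimeEl

/-- every proper prime element `P` of `Max C(X)` (`X` compact Hausdorff) is of
the form `{f : f(x₀) = 0}` for some point `x₀ ∈ X`; in particular it is a maximal proper
closed linear subspace of `C(X)` and a closed two-sided ideal. -/
theorem prime_of_maxC_eq_vanishing_ideal
    (P : Submodule ℂ C(X, ℂ)) (hPc : IsClosed (P : Set C(X, ℂ)))
    (hP : IsPrimeEl P) (hPne : P ≠ ⊤) :
    (∃ x₀ : X, ∀ f : C(X, ℂ), f ∈ P ↔ f x₀ = 0) ∧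
    (∀ M : Submodule ℂ C(X, ℂ), IsClosed (M : Set C(X, ℂ)) → P < M → M = ⊤) ∧
    (∀ f ∈ P, ∀ g : C(X, ℂ), g * f ∈ P ∧ f * g ∈ P) := by
  obtain ⟨x₀, hx₀⟩ := hP.exists_vanishingOn_singleton_le hPc hPne
  have hcoatom := isCoatom_vanishingOn_singleton x₀
  obtain rfl : P = vanishingOn {x₀} := (hcoatom.le_iff.1 hx₀).resolve_left hPne
  refine ⟨⟨x₀, fun f => by simp [mem_vanishingOn]⟩, fun M _ => hcoatom.lt_iff.1, ?_⟩
  intro f hf g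
  simp_all [mem_vanishingOn]
end

section
/- Max ℂ has exactly two elements ({0} and ℂ), so the product quantale Max ℂ × Max ℂ (with componentwise order and multiplication) has exactly four elements, whereas the lattice Max(ℂ × ℂ) of linear subspaces of the C*-algebra ℂ × ℂ is infinite. Consequently there is no order isomorphism (a fortiori no isomorphism of unital quantales) between Max(ℂ × ℂ) and Max ℂ × Max ℂ; in particular, the functor Max does not preserve binary products. -/
/-!
Subspaces of a finite-dimensional space are closed, so `Max ℂ` and `Max (ℂ × ℂ)` are just the
subspace lattices of `ℂ` and `ℂ²`. The first is a simple order, hence has two elements; the second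
contains the pairwise distinct lines through `(1, c)`, `c ∈ ℂ`, hence cannot be order-isomorphic
to the four-element `Max ℂ × Max ℂ`.
-/

/-- The elements of `Max A`: closed linear subspaces of `A` (here used for `A = ℂ` and
`A = ℂ × ℂ`), with the inclusion (partial) order. -/
abbrev MaxOf (A : Type*) [AddCommGroup A] [Module ℂ A] [TopologicalSpace A] :=
  {M : Submodule ℂ A // IsClosed (M : Set A)}

theorem IsSimpleOrder.natCard_eq_two {α : Type*} [LE α] [BoundedOrder α] [IsSimpleOrder α] :
    Nat.card α = 2 := by
  classical
  rw [Nat.card_congr IsSimpleOrder.equivBool, Nat.card_eq_fintype_card, Fintype.card_bool]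

theorem Submodule.span_singleton_one_prod_injective (R : Type*) [Semiring R] :
    Function.Injective fun c : R => Submodule.span R {((1 : R), c)} := by
  intro a b hab
  have hb : ((1 : R), b) ∈ Submodule.span R {((1 : R), a)} :=
    (congrArg (_ ∈ ·) hab).mpr (Submodule.mem_span_singleton_self _)
  obtain ⟨t, ht⟩ := Submodule.mem_span_singleton.mp hb
  have ht1 : t = 1 := by simpa using congrArg Prod.fst ht
  simpa [ht1] using congrArg Prod.snd ht

section FiniteDimensional

variable (E : Type*) [AddCommGroup E] [TopologicalSpace E] [IsTopologicalAddGroup E]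
  [Module ℂ E] [ContinuousSMul ℂ E] [T2Space E] [FiniteDimensional ℂ E]

def MaxOf.orderIsoSubmodule : MaxOf E ≃o Submodule ℂ E where
  toEquiv := Equiv.subtypeUnivEquiv fun M => M.closed_of_finiteDimensional
  map_rel_iff' := Iff.rfl

end FiniteDimensional

theorem MaxOf.natCard_complex : Nat.card (MaxOf ℂ) = 2 :=
  (Nat.card_congr (MaxOf.orderIsoSubmodule ℂ).toEquiv).trans IsSimpleOrder.natCard_eq_two

theorem MaxOf.infinite_complex_prod : Infinite (MaxOf (ℂ × ℂ)) :=
  Infinite.of_injective _ ((MaxOf.orderIsoSubmodule (ℂ × ℂ)).symm.injective.comp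
    (Submodule.span_singleton_one_prod_injective ℂ))

/-- `Max ℂ` has exactly two elements, so `Max ℂ × Max ℂ` has exactly four
elements, whereas `Max (ℂ × ℂ)` is infinite.  Consequently there is no order isomorphism
(a fortiori no isomorphism of unital quantales) between `Max (ℂ × ℂ)` and `Max ℂ × Max ℂ`;
in particular, `Max` does not preserve binary products. -/
theorem max_does_not_preserve_products :
    Nat.card (MaxOf ℂ) = 2 ∧
    Nat.card (MaxOf ℂ × MaxOf ℂ) = 4 ∧
    Infinite (MaxOf (ℂ × ℂ)) ∧
    IsEmpty (MaxOf (ℂ × ℂ) ≃o MaxOf ℂ × MaxOf ℂ) := by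
  have hprod : Nat.card (MaxOf ℂ × MaxOf ℂ) = 4 := by
    rw [Nat.card_prod, MaxOf.natCard_complex]
  have hfinite : Finite (MaxOf ℂ × MaxOf ℂ) := Nat.finite_of_card_ne_zero (by omega)
  have hinfinite := MaxOf.infinite_complex_prod
  refine ⟨MaxOf.natCard_complex, hprod, hinfinite, ⟨fun f => ?_⟩⟩
  exact not_finite_iff_infinite.mpr hinfinite (Finite.of_equiv _ f.toEquiv.symm)
end
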